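/- arXiv:2003.00581 — 6 statements merged into one kernel-verified Lean document; each statement's English description precedes it below -/
import Mathlib

section
/- For complex s with 0 < Re(s) < 1, ∫₀^∞ {1/y} · y^{s-1} dy = -ζ(s)/s, where {x} denotes the fractional part of x. -/
/-!
The substitution `y = 1/x` turns the integral into the Mellin-type integral
`∫₀^∞ {x} x^{-s-1} dx`, which we split at `x = 1`. On `(0, 1)` the integrand is `x^{-s}`,
contributing `1/(1-s)`. For `Re s > 1`, Abel summation `ζ(s) = s ∫₁^∞ ⌊x⌋ x^{-s-1} dx` gives
`∫₁^∞ {x} x^{-s-1} dx = 1/(s-1) - ζ(s)/s = (1 - ζ₀(s))/s`, where `ζ₀(s) = ζ(s) - 1/(s-1)` is entire.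
The tail integral is the Mellin transform at `-s` of a bounded function vanishing near `0`, hence
holomorphic on `Re s > 0`, and the identity extends there by analytic continuation.
-/

open MeasureTheory Set Filter Topology Asymptotics

lemma cpow_sub_one_mul_self {x : ℂ} (hx : x ≠ 0) (w : ℂ) : x ^ (w - 1) * x = x ^ w := by
  rw [Complex.cpow_sub _ _ hx, Complex.cpow_one, div_mul_cancel₀ _ hx]

lemma eqOn_Ioo_cpow_mul_fract (s : ℂ) :
    EqOn (fun x : ℝ => (x : ℂ) ^ (-s - 1) * Int.fract x) (fun x : ℝ => (x : ℂ) ^ (-s))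
      (Ioo 0 1) := fun x hx => by
  simp only [Int.fract_eq_self.mpr ⟨hx.1.le, hx.2⟩]
  exact cpow_sub_one_mul_self (by exact_mod_cast hx.1.ne') _

lemma integrableOn_Ioc_zero_one_cpow_mul_fract {s : ℂ} (hs : s.re < 1) :
    IntegrableOn (fun x : ℝ => (x : ℂ) ^ (-s - 1) * Int.fract x) (Ioc 0 1) := by
  rw [integrableOn_Ioc_iff_integrableOn_Ioo,
    integrableOn_congr_fun (eqOn_Ioo_cpow_mul_fract s) measurableSet_Ioo,
    ← integrableOn_Ioc_iff_integrableOn_Ioo,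
    ← intervalIntegrable_iff_integrableOn_Ioc_of_le zero_le_one]
  exact intervalIntegral.intervalIntegrable_cpow' (by simpa using hs)

lemma integral_Ioc_zero_one_cpow_mul_fract {s : ℂ} (hs : s.re < 1) :
    ∫ x in Ioc (0 : ℝ) 1, (x : ℂ) ^ (-s - 1) * Int.fract x = 1 / (1 - s) := by
  have hs1 : -s + 1 ≠ 0 := fun h => by simp [show s = 1 by linear_combination -h] at hs
  rw [integral_Ioc_eq_integral_Ioo,
    setIntegral_congr_fun measurableSet_Ioo (eqOn_Ioo_cpow_mul_fract s),
    ← integral_Ioc_eq_integral_Ioo, ← intervalIntegral.integral_of_le zero_le_one,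
    integral_cpow (Or.inl (by simpa using hs)), Complex.ofReal_one, Complex.ofReal_zero,
    Complex.one_cpow, Complex.zero_cpow hs1]
  ring

noncomputable def fractOnIoiOne : ℝ → ℂ := (Ioi 1).indicator fun x => ((Int.fract x : ℝ) : ℂ)

lemma norm_fractOnIoiOne_le_one (x : ℝ) : ‖fractOnIoiOne x‖ ≤ 1 :=
  (norm_indicator_le_norm_self _ x).trans <| by
    rw [Complex.norm_real, Real.norm_of_nonneg (Int.fract_nonneg x)]
    exact (Int.fract_lt_one x).le

lemma measurable_fractOnIoiOne : Measurable fractOnIoiOne :=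
  (Complex.measurable_ofReal.comp measurable_fract).indicator measurableSet_Ioi

lemma fractOnIoiOne_eventuallyEq_zero : fractOnIoiOne =ᶠ[𝓝 0] 0 := by
  filter_upwards [Iio_mem_nhds zero_lt_one] with x hx
  exact indicator_of_notMem (not_lt.mpr hx.le) _

lemma locallyIntegrableOn_fractOnIoiOne : LocallyIntegrableOn fractOnIoiOne (Ioi 0) :=
  ((locallyIntegrable_const (1 : ℝ)).mono measurable_fractOnIoiOne.aestronglyMeasurable
    (ae_of_all _ fun x => by simpa using norm_fractOnIoiOne_le_one x)).locallyIntegrableOn _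

lemma fractOnIoiOne_isBigO_atTop : fractOnIoiOne =O[atTop] (· ^ (-(0 : ℝ))) :=
  IsBigO.of_bound 1 (Eventually.of_forall fun x => by simpa using norm_fractOnIoiOne_le_one x)

lemma fractOnIoiOne_isBigO_nhdsGT_zero (b : ℝ) : fractOnIoiOne =O[𝓝[>] 0] (· ^ (-b)) :=
  (fractOnIoiOne_eventuallyEq_zero.filter_mono nhdsWithin_le_nhds).trans_isBigO (isBigO_zero _ _)

lemma mellinConvergent_fractOnIoiOne {w : ℂ} (hw : w.re < 0) :
    MellinConvergent fractOnIoiOne w :=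
  mellinConvergent_of_isBigO_rpow locallyIntegrableOn_fractOnIoiOne fractOnIoiOne_isBigO_atTop hw
    (fractOnIoiOne_isBigO_nhdsGT_zero _) (sub_one_lt w.re)

lemma differentiableAt_mellin_fractOnIoiOne {w : ℂ} (hw : w.re < 0) :
    DifferentiableAt ℂ (mellin fractOnIoiOne) w :=
  mellin_differentiableAt_of_isBigO_rpow locallyIntegrableOn_fractOnIoiOne
    fractOnIoiOne_isBigO_atTop hw (fractOnIoiOne_isBigO_nhdsGT_zero _) (sub_one_lt w.re)

lemma cpow_smul_fractOnIoiOne (w : ℂ) :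
    (fun x : ℝ => (x : ℂ) ^ (w - 1) • fractOnIoiOne x) =
      (Ioi 1).indicator fun x : ℝ => (x : ℂ) ^ (w - 1) * Int.fract x := by
  ext x
  simp only [fractOnIoiOne, smul_eq_mul, indicator_mul_right]

lemma mellin_fractOnIoiOne (w : ℂ) :
    mellin fractOnIoiOne w = ∫ x in Ioi (1 : ℝ), (x : ℂ) ^ (w - 1) * Int.fract x := by
  rw [mellin, cpow_smul_fractOnIoiOne, setIntegral_indicator measurableSet_Ioi,
    inter_eq_right.mpr (Ioi_subset_Ioi zero_le_one)]

lemma integrableOn_Ioi_one_cpow_mul_fract {s : ℂ} (hs : 0 < s.re) :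
    IntegrableOn (fun x : ℝ => (x : ℂ) ^ (-s - 1) * Int.fract x) (Ioi 1) := by
  have h := mellinConvergent_fractOnIoiOne (w := -s) (by simpa using hs)
  rwa [MellinConvergent, cpow_smul_fractOnIoiOne, integrableOn_indicator_iff measurableSet_Ioi,
    inter_eq_left.mpr (Ioi_subset_Ioi zero_le_one)] at h

lemma riemannZeta_eq_mul_integral_natFloor {s : ℂ} (hs : 1 < s.re) :
    riemannZeta s = s * ∫ x in Ioi (1 : ℝ), (x : ℂ) ^ (-s - 1) * ⌊x⌋₊ := by
  have h := LSeries_eq_mul_integral_of_nonneg (fun _ ↦ 1) zero_le_one hs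
    (by simp [isBigO_refl]) fun _ ↦ zero_le_one
  simp only [Complex.ofReal_one, Finset.sum_const, Nat.card_Icc, add_tsub_cancel_right,
    nsmul_eq_mul, mul_one] at h
  rw [← LSeries_one_eq_riemannZeta hs, Pi.one_def, h, neg_add']
  simp_rw [mul_comm]

lemma integral_Ioi_one_cpow_mul_fract_of_one_lt_re {s : ℂ} (hs : 1 < s.re) :
    ∫ x in Ioi (1 : ℝ), (x : ℂ) ^ (-s - 1) * Int.fract x = (1 - riemannZeta₀ s) / s := by
  have hs0 : s ≠ 0 := Complex.ne_zero_of_re_pos (by linarith)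
  have hs1 : s - 1 ≠ 0 := by rintro h; simp [sub_eq_zero.mp h] at hs
  have hpow : ∫ x in Ioi (1 : ℝ), (x : ℂ) ^ (-s) = 1 / (s - 1) := by
    have : -s + 1 ≠ 0 := fun h => hs1 (by linear_combination -h)
    rw [integral_Ioi_cpow_of_lt (by simpa using hs) zero_lt_one, Complex.ofReal_one,
      Complex.one_cpow]
    field_simp
    ring
  have hfloor : ∫ x in Ioi (1 : ℝ), (x : ℂ) ^ (-s - 1) * ⌊x⌋₊ =
      1 / (s - 1) - ∫ x in Ioi (1 : ℝ), (x : ℂ) ^ (-s - 1) * Int.fract x := by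
    rw [← hpow, ← integral_sub (integrableOn_Ioi_cpow_of_lt (by simpa using hs) zero_lt_one)
      (integrableOn_Ioi_one_cpow_mul_fract (by linarith))]
    refine setIntegral_congr_fun measurableSet_Ioi fun x hx => ?_
    have hx0 : (x : ℂ) ≠ 0 := by exact_mod_cast (zero_lt_one.trans hx).ne'
    have hx_floor : (⌊x⌋₊ : ℝ) = x - Int.fract x := by
      rw [Int.self_sub_fract, ← Int.natCast_floor_eq_floor (zero_lt_one.trans hx).le]; rfl
    rw [← cpow_sub_one_mul_self hx0 (-s), ← mul_sub, ← Complex.ofReal_natCast, hx_floor]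
    push_cast
    ring
  have hζ := riemannZeta_eq_mul_integral_natFloor hs
  rw [riemannZeta_eq_inv_sub_add (sub_ne_zero.mp hs1), hfloor] at hζ
  field_simp at hζ
  rw [eq_div_iff hs0]
  refine mul_left_cancel₀ hs1 ?_
  linear_combination hζ

lemma integral_Ioi_one_cpow_mul_fract {s : ℂ} (hs : 0 < s.re) :
    ∫ x in Ioi (1 : ℝ), (x : ℂ) ^ (-s - 1) * Int.fract x = (1 - riemannZeta₀ s) / s := by
  have hU : IsOpen {z : ℂ | 0 < z.re} := isOpen_lt continuous_const Complex.continuous_re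
  have hmellin : AnalyticOnNhd ℂ (fun z => mellin fractOnIoiOne (-z)) {z | 0 < z.re} :=
    DifferentiableOn.analyticOnNhd (fun z hz => ((differentiableAt_mellin_fractOnIoiOne
      (by simpa using hz)).comp z differentiableAt_id.neg).differentiableWithinAt) hU
  have hzeta : AnalyticOnNhd ℂ (fun z => (1 - riemannZeta₀ z) / z) {z | 0 < z.re} :=
    DifferentiableOn.analyticOnNhd (fun z hz =>
      ((differentiable_riemannZeta₀.const_sub 1).differentiableAt.div differentiableAt_id
        (Complex.ne_zero_of_re_pos hz)).differentiableWithinAt) hU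
  have hagree :
      (fun z => mellin fractOnIoiOne (-z)) =ᶠ[𝓝 2] fun z => (1 - riemannZeta₀ z) / z := by
    filter_upwards [(isOpen_lt continuous_const Complex.continuous_re).mem_nhds
      (show (1 : ℝ) < (2 : ℂ).re by norm_num)] with z hz
    rw [mellin_fractOnIoiOne]
    exact integral_Ioi_one_cpow_mul_fract_of_one_lt_re hz
  rw [← mellin_fractOnIoiOne]
  exact hmellin.eqOn_of_preconnected_of_eventuallyEq hzeta
    (convex_halfSpace_re_gt 0).isPreconnected (show (0 : ℝ) < (2 : ℂ).re by norm_num) hagree hs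

lemma integral_fract_one_div_mul_cpow (s : ℂ) :
    ∫ y in Ioi (0 : ℝ), ((Int.fract (1 / y) : ℝ) : ℂ) * (y : ℂ) ^ (s - 1) =
      ∫ x in Ioi (0 : ℝ), (x : ℂ) ^ (-s - 1) * Int.fract x := by
  have h := mellin_comp_inv (fun x => ((Int.fract x : ℝ) : ℂ)) s
  simp only [mellin, smul_eq_mul, one_div] at h ⊢
  simpa only [mul_comm] using h

theorem stmt_3 (s : ℂ) (hs : 0 < s.re) (hs1 : s.re < 1) :
    ∫ y in Set.Ioi (0 : ℝ), ((Int.fract (1 / y) : ℝ) : ℂ) * (y : ℂ) ^ (s - 1) =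
      -riemannZeta s / s := by
  have hs0 : s ≠ 0 := Complex.ne_zero_of_re_pos hs
  have hs1' : s ≠ 1 := by rintro rfl; simp at hs1
  rw [integral_fract_one_div_mul_cpow, ← Ioc_union_Ioi_eq_Ioi zero_le_one,
    setIntegral_union (Ioc_disjoint_Ioi le_rfl) measurableSet_Ioi
      (integrableOn_Ioc_zero_one_cpow_mul_fract hs1) (integrableOn_Ioi_one_cpow_mul_fract hs),
    integral_Ioc_zero_one_cpow_mul_fract hs1, integral_Ioi_one_cpow_mul_fract hs,
    riemannZeta_eq_inv_sub_add hs1']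
  have : 1 - s ≠ 0 := sub_ne_zero.mpr hs1'.symm
  field_simp
  ring
end

section
/- For real σ with 0 < σ < 1, the function y ↦ e^{σy}(ψ(e^y + 1) - y) is integrable on ℝ, where ψ is the digamma function. -/
open MeasureTheory

/-- The digamma function ψ = Γ'/Γ on the reals. -/
noncomputable def digamma (x : ℝ) : ℝ := deriv Real.Gamma x / Real.Gamma x

/-!
Since `log ∘ Γ` is convex and `log Γ(x + 1) - log Γ(x) = log x`, its derivative `ψ(x + 1)` lies
between the chord slopes `log x` and `log (x + 1)`. With `x = e^y` the integrand is therefore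
squeezed between `0` and `e^{σy} log (1 + e^{-y})`, and `log (1 + s) ≤ s^ε / ε` for `0 < ε ≤ 1`
bounds the latter by `e^{(σ-1)y}` (take `ε = 1`) and by `(2/σ) e^{σy/2}` (take `ε = σ/2`), which
are integrable on `(0, ∞)` and `(-∞, 0]` respectively.
-/

open Real Set

lemma differentiableAt_Gamma_of_pos {x : ℝ} (hx : 0 < x) : DifferentiableAt ℝ Gamma x :=
  differentiableAt_Gamma fun m => by linarith [(m.cast_nonneg : (0 : ℝ) ≤ m)]

lemma hasDerivAt_log_Gamma {x : ℝ} (hx : 0 < x) :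
    HasDerivAt (log ∘ Gamma) (digamma x) x :=
  (differentiableAt_Gamma_of_pos hx).hasDerivAt.log (Gamma_pos_of_pos hx).ne'

lemma slope_log_Gamma {x : ℝ} (hx : 0 < x) : slope (log ∘ Gamma) x (x + 1) = log x := by
  rw [slope_def_field, Function.comp_apply, Function.comp_apply, Gamma_add_one hx.ne',
    log_mul hx.ne' (Gamma_pos_of_pos hx).ne']
  ring

lemma log_le_digamma_add_one {x : ℝ} (hx : 0 < x) : log x ≤ digamma (x + 1) := by
  have hx1 : 0 < x + 1 := by linarith
  simpa only [slope_log_Gamma hx] using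
    convexOn_log_Gamma.slope_le_of_hasDerivAt hx hx1 (lt_add_one x) (hasDerivAt_log_Gamma hx1)

lemma digamma_add_one_le_log_add_one {x : ℝ} (hx : 0 < x) : digamma (x + 1) ≤ log (x + 1) := by
  have hx1 : 0 < x + 1 := by linarith
  simpa only [slope_log_Gamma hx1] using
    convexOn_log_Gamma.le_slope_of_hasDerivAt hx1 (by simp only [mem_Ioi]; linarith) (lt_add_one _)
      (hasDerivAt_log_Gamma hx1)

lemma log_one_add_le_rpow_div {s ε : ℝ} (hs : 0 ≤ s) (hε : 0 < ε) (hε1 : ε ≤ 1) :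
    log (1 + s) ≤ s ^ ε / ε := by
  have h1 : (1 + s) ^ ε ≤ 1 + s ^ ε := by
    simpa only [one_rpow] using rpow_add_le_add_rpow zero_le_one hs hε.le hε1
  rw [le_div_iff₀ hε, mul_comm, ← log_rpow (by positivity)]
  calc log ((1 + s) ^ ε) ≤ (1 + s) ^ ε - 1 := log_le_sub_one_of_pos (by positivity)
    _ ≤ s ^ ε := by linarith

lemma exp_mul_log_one_add_exp_neg_le (σ y : ℝ) {ε : ℝ} (hε : 0 < ε) (hε1 : ε ≤ 1) :
    exp (σ * y) * log (1 + exp (-y)) ≤ exp ((σ - ε) * y) / ε := by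
  have h := log_one_add_le_rpow_div (exp_pos (-y)).le hε hε1
  rw [← exp_mul] at h
  calc exp (σ * y) * log (1 + exp (-y)) ≤ exp (σ * y) * (exp (-y * ε) / ε) :=
        mul_le_mul_of_nonneg_left h (exp_pos _).le
    _ = exp ((σ - ε) * y) / ε := by rw [mul_div_assoc', ← exp_add]; ring_nf

lemma integrableOn_exp_mul_log_one_add_exp_neg {σ ε : ℝ} {s : Set ℝ} (hε : 0 < ε) (hε1 : ε ≤ 1)
    (h : IntegrableOn (fun y => exp ((σ - ε) * y)) s) :
    IntegrableOn (fun y => exp (σ * y) * log (1 + exp (-y))) s := by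
  refine (h.div_const ε).mono' (by fun_prop) (Filter.Eventually.of_forall fun y => ?_)
  have hlog : 0 ≤ log (1 + exp (-y)) := log_nonneg (by linarith [exp_pos (-y)])
  rw [norm_of_nonneg (mul_nonneg (exp_pos _).le hlog)]
  exact exp_mul_log_one_add_exp_neg_le σ y hε hε1

lemma integrable_exp_mul_log_one_add_exp_neg {σ : ℝ} (hσ : 0 < σ) (hσ1 : σ < 1) :
    Integrable fun y => exp (σ * y) * log (1 + exp (-y)) := by
  rw [← integrableOn_univ, ← Iic_union_Ioi (a := 0), integrableOn_union]
  constructor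
  · refine integrableOn_exp_mul_log_one_add_exp_neg (half_pos hσ) (by linarith) ?_
    simpa only [sub_half] using integrableOn_exp_mul_Iic (half_pos hσ) 0
  · exact integrableOn_exp_mul_log_one_add_exp_neg one_pos le_rfl
      (integrableOn_exp_mul_Ioi (by linarith) 0)

lemma measurable_digamma_comp {f : ℝ → ℝ} (hf : Continuous f) (hpos : ∀ y, 0 < f y) :
    Measurable fun y => digamma (f y) := by
  have hGamma : Continuous fun y => Gamma (f y) := continuous_iff_continuousAt.2 fun y =>
    (differentiableAt_Gamma_of_pos (hpos y)).continuousAt.comp hf.continuousAt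
  exact ((measurable_deriv Gamma).comp hf.measurable).div hGamma.measurable

lemma digamma_exp_add_one_sub_self_nonneg (y : ℝ) : 0 ≤ digamma (exp y + 1) - y := by
  linarith [log_exp y ▸ log_le_digamma_add_one (exp_pos y)]

lemma digamma_exp_add_one_sub_self_le (y : ℝ) :
    digamma (exp y + 1) - y ≤ log (1 + exp (-y)) := by
  have h : log (exp y + 1) = y + log (1 + exp (-y)) := by
    rw [← log_exp y, ← log_mul (exp_pos _).ne' (by positivity), mul_add, ← exp_add]
    simp only [add_neg_cancel, exp_zero, mul_one, log_exp]
  linarith [digamma_add_one_le_log_add_one (exp_pos y)]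

theorem stmt_6 (σ : ℝ) (hσ : 0 < σ) (hσ1 : σ < 1) :
    Integrable (fun y : ℝ => Real.exp (σ * y) * (digamma (Real.exp y + 1) - y)) := by
  have hmeas : Measurable fun y => digamma (exp y + 1) :=
    measurable_digamma_comp (by fun_prop) fun y => by positivity
  refine (integrable_exp_mul_log_one_add_exp_neg hσ hσ1).mono' (by fun_prop)
    (Filter.Eventually.of_forall fun y => ?_)
  rw [norm_mul, norm_of_nonneg (exp_pos _).le,
    norm_of_nonneg (digamma_exp_add_one_sub_self_nonneg y)]
  exact mul_le_mul_of_nonneg_left (digamma_exp_add_one_sub_self_le y) (exp_pos _).le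
end

section
/- Let k, f ∈ L¹(ℝ) with convolution k ⋆ f = 0 almost everywhere. If the Fourier transform of k is nowhere zero, then f = 0 almost everywhere. -/
/-! By the convolution theorem `𝓕 (k ⋆ f) = 𝓕 k • 𝓕 f`, so `𝓕 f` vanishes identically because
`𝓕 k` has no zeros. Then `f = 0` a.e. since `∫ 𝓕 φ • f = ∫ φ • 𝓕 f = 0` for Schwartz `φ`, and the
functions `𝓕 φ` include all smooth compactly supported test functions. -/

open MeasureTheory Complex FourierTransform Convolution ContinuousLinearMap SchwartzMap

section

variable {V F : Type*} [NormedAddCommGroup V] [InnerProductSpace ℝ V] [FiniteDimensional ℝ V]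
  [MeasurableSpace V] [BorelSpace V] [NormedAddCommGroup F] [NormedSpace ℂ F] [CompleteSpace F]

theorem Real.integral_fourier_smul_eq_of_integrable {φ : V → ℂ} {f : V → F}
    (hφ : Integrable φ) (hf : Integrable f) :
    ∫ ξ, 𝓕 φ ξ • f ξ = ∫ x, φ x • 𝓕 f x := by
  simpa using! VectorFourier.integral_fourierIntegral_smul_eq_flip (L := innerₗ V)
    Real.continuous_fourierChar continuous_inner hφ hf

theorem MeasureTheory.Integrable.ae_eq_zero_of_fourier_eq_zero {f : V → F} (hf : Integrable f)
    (h : 𝓕 f = 0) : f =ᵐ[volume] 0 := by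
  refine ae_eq_zero_of_integral_contDiff_smul_eq_zero hf.locallyIntegrable fun g hg hgc => ?_
  let G : 𝓢(V, ℂ) := (hgc.comp_left ofReal_zero).toSchwartzMap (ofRealCLM.contDiff.comp hg)
  calc ∫ x, g x • f x = ∫ x, 𝓕 (𝓕⁻ G) x • f x := by
        rw [FourierTransform.fourier_fourierInv_eq G]
        congr 1 with x
    _ = ∫ x, (𝓕⁻ G) x • 𝓕 f x := Real.integral_fourier_smul_eq_of_integrable (𝓕⁻ G).integrable hf
    _ = 0 := by simp [h]

theorem Real.fourier_eq_zero_of_convolution_ae_eq_zero {k : V → ℂ} {f : V → F}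
    (hk : Integrable k) (hf : Integrable f) (hK : ∀ ξ, 𝓕 k ξ ≠ 0)
    (hconv : k ⋆[lsmul ℂ ℂ] f =ᵐ[volume] 0) : 𝓕 f = 0 := by
  ext ξ
  have : 𝓕 k ξ • 𝓕 f ξ = 0 := by
    rw [← Real.fourier_smul_convolution_eq hk hf, Real.fourier_congr_ae hconv]
    simp [Real.fourier_eq]
  exact (smul_eq_zero.mp this).resolve_left (hK ξ)

end

theorem Real.fourier_apply_eq_integral_cexp (k : ℝ → ℂ) (ξ : ℝ) :
    𝓕 k ξ = ∫ x : ℝ, cexp (-(I * ↑(2 * Real.pi * ξ) * x)) * k x := by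
  rw [Real.fourier_real_eq_integral_exp_smul]
  congr 1 with x
  rw [smul_eq_mul]
  congr 2
  push_cast
  ring

theorem stmt_11 (k f : ℝ → ℂ) (hk : Integrable k) (hf : Integrable f)
    (hK : ∀ ξ : ℝ, (∫ x : ℝ, Complex.exp (-(Complex.I * ξ * x)) * k x) ≠ 0)
    (hconv : (fun x : ℝ => ∫ y : ℝ, k (x - y) * f y) =ᵐ[volume] 0) :
    f =ᵐ[volume] 0 := by
  have hconv' : k ⋆[lsmul ℂ ℂ] f =ᵐ[volume] 0 := by
    filter_upwards [hconv] with x hx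
    simpa [convolution_lsmul_swap] using hx
  refine hf.ae_eq_zero_of_fourier_eq_zero
    (Real.fourier_eq_zero_of_convolution_ae_eq_zero hk hf (fun ξ => ?_) hconv')
  rw [Real.fourier_apply_eq_integral_cexp]
  exact hK _
end

section
/- Suppose k ∈ L¹(ℝ) and the linear span of the translates {x ↦ k(x - y) : y ∈ ℝ} is dense in L¹(ℝ). Then the Fourier transform of k has no zeros on ℝ. -/
/-!
Pairing with the character `x ↦ exp (-iξx)` is a linear functional on `L¹(ℝ)` of norm at most one.
If `K(ξ) = 0`, it kills every translate of `k`, since translating `k` by `c` multiplies the pairing by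
`exp (-iξc)`; hence it kills their linear span. But it takes the value `1` on
`f = 1_{[0,1]} · exp (iξx)`, so no combination of translates comes within `L¹`-distance `1` of `f`.
-/

open MeasureTheory Complex

lemma norm_exp_neg_I_mul (ξ x : ℝ) : ‖exp (-(I * ξ * x))‖ = 1 := by
  rw [norm_exp]
  simp [mul_re, mul_im]

lemma MeasureTheory.Integrable.exp_neg_I_mul {f : ℝ → ℂ} (hf : Integrable f) (ξ : ℝ) :
    Integrable fun x : ℝ => exp (-(I * ξ * x)) * f x :=
  hf.bdd_mul (by fun_prop) (ae_of_all _ fun x => (norm_exp_neg_I_mul ξ x).le)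

lemma integral_exp_neg_I_mul_comp_sub (f : ℝ → ℂ) (ξ c : ℝ) :
    ∫ x : ℝ, exp (-(I * ξ * x)) * f (x - c) =
      exp (-(I * ξ * c)) * ∫ x : ℝ, exp (-(I * ξ * x)) * f x := by
  have hshift : ∀ x : ℝ, exp (-(I * ξ * x)) * f (x - c) =
      exp (-(I * ξ * c)) * (exp (-(I * ξ * ↑(x - c))) * f (x - c)) := by
    intro x
    rw [← mul_assoc, ← exp_add]
    push_cast
    ring_nf
  simp_rw [hshift]
  rw [integral_sub_right_eq_self (fun y : ℝ => exp (-(I * ξ * c)) *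
    (exp (-(I * ξ * y)) * f y)) c, integral_const_mul]

lemma integral_exp_neg_I_mul_sum_translates_eq_zero {k : ℝ → ℂ} (hk : Integrable k) {ξ : ℝ}
    (hK : ∫ x : ℝ, exp (-(I * ξ * x)) * k x = 0) {ι : Type*} (s : Finset ι) (a : ι → ℂ)
    (z : ι → ℝ) :
    ∫ x : ℝ, exp (-(I * ξ * x)) * ∑ i ∈ s, a i * k (x - z i) = 0 := by
  simp_rw [Finset.mul_sum, mul_left_comm (exp _)]
  rw [integral_finsetSum _ fun i _ => ((hk.comp_sub_right (z i)).exp_neg_I_mul ξ).const_mul _]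
  simp [integral_const_mul, integral_exp_neg_I_mul_comp_sub, hK]

lemma norm_integral_exp_neg_I_mul_sub_le {f g : ℝ → ℂ} (hf : Integrable f) (hg : Integrable g)
    (ξ : ℝ) :
    ‖(∫ x : ℝ, exp (-(I * ξ * x)) * f x) - ∫ x : ℝ, exp (-(I * ξ * x)) * g x‖ ≤
      ∫ x : ℝ, ‖f x - g x‖ :=
  calc _ = ‖∫ x : ℝ, exp (-(I * ξ * x)) * (f x - g x)‖ := by
        simp_rw [mul_sub]
        rw [integral_sub (hf.exp_neg_I_mul ξ) (hg.exp_neg_I_mul ξ)]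
    _ ≤ ∫ x : ℝ, ‖exp (-(I * ξ * x)) * (f x - g x)‖ := norm_integral_le_integral_norm _
    _ = ∫ x : ℝ, ‖f x - g x‖ := by simp_rw [norm_mul, norm_exp_neg_I_mul, one_mul]

lemma integrable_indicator_Icc_exp_I_mul (ξ : ℝ) :
    Integrable ((Set.Icc (0 : ℝ) 1).indicator fun x : ℝ => exp (I * ξ * x)) :=
  (Continuous.integrableOn_Icc (by fun_prop)).integrable_indicator measurableSet_Icc

lemma integral_exp_neg_I_mul_indicator_Icc_exp_I_mul (ξ : ℝ) :
    ∫ x : ℝ, exp (-(I * ξ * x)) * (Set.Icc (0 : ℝ) 1).indicator (fun x : ℝ => exp (I * ξ * x)) x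
      = 1 := by
  have hprod : ∀ x : ℝ, exp (-(I * ξ * x)) *
      (Set.Icc (0 : ℝ) 1).indicator (fun x : ℝ => exp (I * ξ * x)) x =
        (Set.Icc (0 : ℝ) 1).indicator (fun _ => (1 : ℂ)) x := by
    intro x
    by_cases hx : x ∈ Set.Icc (0 : ℝ) 1 <;> simp [Set.indicator, hx, ← exp_add]
  simp_rw [hprod]
  rw [integral_indicator measurableSet_Icc]
  simp

theorem stmt_12 (k : ℝ → ℂ) (hk : Integrable k)
    (hdense : ∀ f : ℝ → ℂ, Integrable f → ∀ ε : ℝ, 0 < ε →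
      ∃ (n : ℕ) (a : Fin n → ℂ) (z : Fin n → ℝ),
        ∫ x : ℝ, ‖f x - ∑ i, a i * k (x - z i)‖ < ε) :
    ∀ ξ : ℝ, (∫ x : ℝ, Complex.exp (-(Complex.I * ξ * x)) * k x) ≠ 0 := by
  intro ξ hK
  have hf := integrable_indicator_Icc_exp_I_mul ξ
  obtain ⟨n, a, z, hclose⟩ := hdense _ hf 1 one_pos
  have hg : Integrable fun x => ∑ i, a i * k (x - z i) :=
    integrable_finsetSum _ fun i _ => (hk.comp_sub_right (z i)).const_mul _
  have hbound := norm_integral_exp_neg_I_mul_sub_le hf hg ξ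
  rw [integral_exp_neg_I_mul_indicator_Icc_exp_I_mul,
    integral_exp_neg_I_mul_sum_translates_eq_zero hk hK, sub_zero, norm_one] at hbound
  linarith
end

section
/- Let k ∈ L¹(ℝ) with nowhere-vanishing Fourier transform. If f₁, f₂ ∈ L¹(ℝ) satisfy k ⋆ f₁ = k ⋆ f₂ almost everywhere, then f₁ = f₂ almost everywhere. -/
/-!
Taking Fourier transforms turns `k ⋆ f₁ = k ⋆ f₂` into `𝓕 k · 𝓕 f₁ = 𝓕 k · 𝓕 f₂`, hence
`𝓕 f₁ = 𝓕 f₂` since `𝓕 k` never vanishes. An integrable function is determined by its Fourier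
transform: a test function `φ` is the Fourier transform of the Schwartz function `𝓕⁻ φ`, so by
the duality `∫ 𝓕 ψ • f = ∫ ψ • 𝓕 f` the pairings `∫ φ • f` only depend on `𝓕 f`.
-/

open MeasureTheory
open scoped FourierTransform ContDiff Convolution SchwartzMap

namespace Real

variable {V E : Type*} [NormedAddCommGroup V] [InnerProductSpace ℝ V] [FiniteDimensional ℝ V]
  [MeasurableSpace V] [BorelSpace V] [NormedAddCommGroup E] [NormedSpace ℂ E] [CompleteSpace E]

theorem integral_fourier_smul_eq {f : V → ℂ} {g : V → E} (hf : Integrable f)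
    (hg : Integrable g) : ∫ ξ, 𝓕 f ξ • g ξ = ∫ x, f x • 𝓕 g x := by
  simpa using! VectorFourier.integral_fourierIntegral_smul_eq_flip (L := innerₗ V)
    continuous_fourierChar continuous_inner hf hg

theorem ae_eq_of_fourier_eq {f g : V → E} (hf : Integrable f) (hg : Integrable g)
    (hfg : 𝓕 f = 𝓕 g) : f =ᵐ[volume] g := by
  refine ae_eq_of_integral_contDiff_smul_eq hf.locallyIntegrable hg.locallyIntegrable
    fun φ hφ hφc => ?_
  let ψ : 𝓢(V, ℂ) := 𝓕⁻ ((hφc.comp_left rfl).toSchwartzMap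
    (by fun_prop : ContDiff ℝ ∞ (Complex.ofRealCLM ∘ φ)))
  have pairing_eq (h : V → E) (hh : Integrable h) : ∫ x, φ x • h x = ∫ x, ψ x • 𝓕 h x := by
    rw [← integral_fourier_smul_eq ψ.integrable hh, ← SchwartzMap.fourier_coe,
      FourierTransform.fourier_fourierInv_eq]
    simp [Complex.coe_smul]
  rw [pairing_eq f hf, pairing_eq g hg, hfg]

theorem ae_eq_of_convolution_ae_eq {k : V → ℂ} {f₁ f₂ : V → E} (hk : Integrable k)
    (hf₁ : Integrable f₁) (hf₂ : Integrable f₂) (hk₀ : ∀ w, 𝓕 k w ≠ 0)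
    (h : k ⋆[ContinuousLinearMap.lsmul ℂ ℂ] f₁ =ᵐ[volume]
      k ⋆[ContinuousLinearMap.lsmul ℂ ℂ] f₂) :
    f₁ =ᵐ[volume] f₂ := by
  refine ae_eq_of_fourier_eq hf₁ hf₂ (funext fun w => smul_right_injective E (hk₀ w) ?_)
  change 𝓕 k w • 𝓕 f₁ w = 𝓕 k w • 𝓕 f₂ w
  rw [← fourier_smul_convolution_eq hk hf₁, ← fourier_smul_convolution_eq hk hf₂,
    fourier_congr_ae h]

end Real

theorem stmt_13 (k f₁ f₂ : ℝ → ℂ) (hk : Integrable k)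
    (hf₁ : Integrable f₁) (hf₂ : Integrable f₂)
    (hK : ∀ ξ : ℝ, (∫ x : ℝ, Complex.exp (-(Complex.I * ξ * x)) * k x) ≠ 0)
    (hconv : (fun x : ℝ => ∫ y : ℝ, k (x - y) * f₁ y) =ᵐ[volume]
             (fun x : ℝ => ∫ y : ℝ, k (x - y) * f₂ y)) :
    f₁ =ᵐ[volume] f₂ := by
  refine Real.ae_eq_of_convolution_ae_eq hk hf₁ hf₂ (fun w => ?_) ?_
  · -- Mathlib's `𝓕 k w` is the transform in `hK` at the angular frequency `ξ = 2πw`.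
    convert hK (2 * Real.pi * w) using 1
    rw [Real.fourier_real_eq_integral_exp_smul]
    congr 1 with x
    rw [smul_eq_mul]
    push_cast
    ring_nf
  · have convolution_eq (f : ℝ → ℂ) :
        k ⋆[ContinuousLinearMap.lsmul ℂ ℂ] f = fun x => ∫ y, k (x - y) * f y :=
      funext fun _ => convolution_lsmul_swap
    rwa [convolution_eq, convolution_eq]
end

section
/- For real σ with 1/2 < σ < 1, the function x ↦ e^{σx}(Ei(-e^x) - 2Ei(-2e^x)) is in L²(ℝ). -/
open MeasureTheory

/-- The real exponential integral `Ei x = -∫_{-x}^∞ e^{-t}/t dt`, written (for `x < 0`)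
via the substitution `t = -x u` as `Ei x = -∫_1^∞ e^{x u}/u du`. -/
noncomputable def expIntegralEiReal (x : ℝ) : ℝ :=
  -∫ u in Set.Ioi (1 : ℝ), Real.exp (x * u) / u

/-!
For `0 < s ≤ 1` one has `e^{-v} ≤ v^{-s}`, hence `|Ei(-y)| ≤ y^{-s}/s` and
`|e^{σx}(Ei(-e^x) - 2 Ei(-2e^x))| ≤ (3/s) e^{(σ-s)x}` for every real `x`.
With `s = 1` this decays exponentially as `x → ∞` because `σ < 1`,
and with `s = σ/2` as `x → -∞` because `σ > 0`.
-/

open Real Set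

lemma rpow_le_exp_of_le_one {v s : ℝ} (hv : 0 ≤ v) (hs0 : 0 ≤ s) (hs1 : s ≤ 1) :
    v ^ s ≤ exp v := by
  refine le_trans ?_ (add_one_le_exp v)
  rcases le_total v 1 with hv1 | hv1
  · linarith [rpow_le_one hv hv1 hs0]
  · calc v ^ s ≤ v ^ (1 : ℝ) := rpow_le_rpow_of_exponent_le hv1 hs1
      _ ≤ v + 1 := by rw [rpow_one]; linarith

lemma exp_neg_mul_div_le_rpow {y u s : ℝ} (hy : 0 < y) (hu : 0 < u) (hs0 : 0 ≤ s)
    (hs1 : s ≤ 1) :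
    exp (-y * u) / u ≤ y ^ (-s) * u ^ (-s - 1) := by
  have hyu : 0 < y * u := mul_pos hy hu
  have hexp : exp (-y * u) ≤ (y * u) ^ (-s) := by
    rw [neg_mul, exp_neg, rpow_neg hyu.le]
    exact inv_anti₀ (rpow_pos_of_pos hyu s) (rpow_le_exp_of_le_one hyu.le hs0 hs1)
  calc exp (-y * u) / u ≤ (y * u) ^ (-s) / u := by gcongr
    _ = y ^ (-s) * u ^ (-s - 1) := by
      rw [mul_rpow hy.le hu.le, rpow_sub hu, rpow_one, mul_div_assoc]

lemma abs_expIntegralEiReal_neg_le {y s : ℝ} (hy : 0 < y) (hs0 : 0 < s) (hs1 : s ≤ 1) :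
    |expIntegralEiReal (-y)| ≤ y ^ (-s) / s := by
  have hnonneg : ∀ u ∈ Ioi (1 : ℝ), 0 ≤ exp (-y * u) / u := fun u hu =>
    div_nonneg (exp_pos _).le (zero_le_one.trans hu.le)
  rw [expIntegralEiReal, abs_neg, abs_of_nonneg (setIntegral_nonneg measurableSet_Ioi hnonneg)]
  calc ∫ u in Ioi 1, exp (-y * u) / u ≤ ∫ u in Ioi 1, y ^ (-s) * u ^ (-s - 1) := by
        refine integral_mono_of_nonneg (ae_restrict_of_forall_mem measurableSet_Ioi hnonneg)
          ((integrableOn_Ioi_rpow_of_lt (by linarith) one_pos).const_mul _)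
          (ae_restrict_of_forall_mem measurableSet_Ioi fun u hu => ?_)
        exact exp_neg_mul_div_le_rpow hy (zero_lt_one.trans hu) hs0.le hs1
    _ = y ^ (-s) / s := by
      rw [integral_const_mul, integral_Ioi_rpow_of_lt (by linarith) one_pos]
      simp only [sub_add_cancel, one_rpow]
      field_simp

lemma abs_expIntegralEiReal_neg_sub_le {y s : ℝ} (hy : 0 < y) (hs0 : 0 < s) (hs1 : s ≤ 1) :
    |expIntegralEiReal (-y) - 2 * expIntegralEiReal (-(2 * y))| ≤ 3 * y ^ (-s) / s := by
  have h2 : (2 * y) ^ (-s) ≤ y ^ (-s) := by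
    rw [mul_rpow zero_le_two hy.le]
    exact mul_le_of_le_one_left (by positivity)
      (rpow_le_one_of_one_le_of_nonpos (by norm_num) (by linarith))
  calc _ ≤ |expIntegralEiReal (-y)| + |2 * expIntegralEiReal (-(2 * y))| := abs_sub _ _
    _ = |expIntegralEiReal (-y)| + 2 * |expIntegralEiReal (-(2 * y))| := by
        rw [abs_mul, abs_two]
    _ ≤ y ^ (-s) / s + 2 * (y ^ (-s) / s) := by
        gcongr
        · exact abs_expIntegralEiReal_neg_le hy hs0 hs1
        · exact (abs_expIntegralEiReal_neg_le (by positivity) hs0 hs1).trans (by gcongr)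
    _ = 3 * y ^ (-s) / s := by ring

@[fun_prop]
lemma measurable_expIntegralEiReal : Measurable expIntegralEiReal :=
  (((measurable_fst.mul measurable_snd).exp.div measurable_snd).stronglyMeasurable
    |>.integral_prod_right' (ν := volume.restrict (Ioi 1))).measurable.neg

lemma memLp_exp_mul_Ioi {a : ℝ} (ha : a < 0) (c : ℝ) {p : ENNReal} (hp0 : p ≠ 0)
    (hp : p ≠ ⊤) : MemLp (fun x => exp (a * x)) p (volume.restrict (Ioi c)) := by
  refine (integrable_norm_rpow_iff (by fun_prop) hp0 hp).mp ?_
  have hp' : 0 < p.toReal := ENNReal.toReal_pos hp0 hp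
  refine (integrableOn_exp_mul_Ioi (mul_neg_of_neg_of_pos ha hp') c)
    |>.congr_fun (fun x _ => ?_) measurableSet_Ioi
  rw [norm_of_nonneg (exp_pos _).le, ← exp_mul]
  ring_nf

lemma memLp_exp_mul_Iic {b : ℝ} (hb : 0 < b) (c : ℝ) {p : ENNReal} (hp0 : p ≠ 0)
    (hp : p ≠ ⊤) : MemLp (fun x => exp (b * x)) p (volume.restrict (Iic c)) := by
  refine (integrable_norm_rpow_iff (by fun_prop) hp0 hp).mp ?_
  have hp' : 0 < p.toReal := ENNReal.toReal_pos hp0 hp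
  refine (integrableOn_exp_mul_Iic (mul_pos hb hp') c)
    |>.congr_fun (fun x _ => ?_) measurableSet_Iic
  rw [norm_of_nonneg (exp_pos _).le, ← exp_mul]
  ring_nf

lemma memLp_of_norm_le_exp {E : Type*} [NormedAddCommGroup E] {f : ℝ → E} {p : ENNReal}
    (hp0 : p ≠ 0) (hp : p ≠ ⊤) (hf : AEStronglyMeasurable f) {a b C C' : ℝ} (ha : a < 0)
    (hb : 0 < b) (hpos : ∀ x, 0 < x → ‖f x‖ ≤ C * exp (a * x))
    (hneg : ∀ x ≤ 0, ‖f x‖ ≤ C' * exp (b * x)) : MemLp f p volume := by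
  classical
  have hIoi : MemLp f p (volume.restrict (Ioi 0)) :=
    (memLp_exp_mul_Ioi ha 0 hp0 hp).of_le_mul hf.restrict <|
      ae_restrict_of_forall_mem measurableSet_Ioi fun x hx => by
        simpa only [norm_of_nonneg (exp_pos _).le] using hpos x hx
  have hIic : MemLp f p (volume.restrict (Ioi 0)ᶜ) := by
    rw [compl_Ioi]
    exact (memLp_exp_mul_Iic hb 0 hp0 hp).of_le_mul hf.restrict <|
      ae_restrict_of_forall_mem measurableSet_Iic fun x hx => by
        simpa only [norm_of_nonneg (exp_pos _).le] using hneg x hx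
  simpa only [piecewise_same] using hIoi.piecewise measurableSet_Ioi hIic

lemma norm_exp_mul_expIntegralEiReal_sub_le (σ x : ℝ) {s : ℝ} (hs0 : 0 < s) (hs1 : s ≤ 1) :
    ‖exp (σ * x) * (expIntegralEiReal (-exp x) - 2 * expIntegralEiReal (-2 * exp x))‖ ≤
      3 / s * exp ((σ - s) * x) := by
  rw [norm_mul, norm_of_nonneg (exp_pos _).le, neg_mul, Real.norm_eq_abs]
  calc _ ≤ exp (σ * x) * (3 * exp x ^ (-s) / s) := by
        gcongr; exact abs_expIntegralEiReal_neg_sub_le (exp_pos x) hs0 hs1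
    _ = 3 / s * exp ((σ - s) * x) := by
        rw [← exp_mul, show (σ - s) * x = σ * x + x * -s by ring, exp_add]
        ring

theorem stmt_16 (σ : ℝ) (hσ : 1 / 2 < σ) (hσ1 : σ < 1) :
    MemLp (fun x : ℝ =>
        Real.exp (σ * x) *
          (expIntegralEiReal (-Real.exp x) - 2 * expIntegralEiReal (-2 * Real.exp x)))
      2 volume := by
  have hσ0 : 0 < σ := by linarith
  exact memLp_of_norm_le_exp two_ne_zero ENNReal.ofNat_ne_top
    (by fun_prop : Measurable _).aestronglyMeasurable (sub_neg.mpr hσ1)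
    (sub_pos.mpr (half_lt_self hσ0))
    (fun x _ => norm_exp_mul_expIntegralEiReal_sub_le σ x one_pos le_rfl)
    (fun x _ => norm_exp_mul_expIntegralEiReal_sub_le σ x (half_pos hσ0) (by linarith))
end
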